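/- The minimum defect over all Mondrian partitions of the 3×3 square equals 2; that is, d(3) = d_3(3) = 2, and this optimum is attained using exactly three rectangles. -/
import Mathlib


/-- An axis-aligned rectangle with integer coordinates placed on the grid:
lower-left corner `(x, y)`, width `w`, and height `h`. -/
structure Rect where
  x : ℕ
  y : ℕ
  w : ℕ
  h : ℕ
deriving DecidableEq

/-- The area of a rectangle. -/
def Rect.area (r : Rect) : ℕ := r.w * r.h

/-- Two rectangles are congruent if they have the same dimensions,
possibly after a ninety-degree rotation. -/
def Rect.Congruent (r s : Rect) : Prop :=
  (r.w = s.w ∧ r.h = s.h) ∨ (r.w = s.h ∧ r.h = s.w)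

/-- The rectangle `r` covers the unit grid cell `[i, i+1) × [j, j+1)`. -/
def Rect.Covers (r : Rect) (i j : ℕ) : Prop :=
  r.x ≤ i ∧ i < r.x + r.w ∧ r.y ≤ j ∧ j < r.y + r.h

/-- A Mondrian partition of the `n × n` square: a finite collection of
pairwise non-congruent rectangles with positive integer side lengths that
tile the square (every cell of the square is covered by exactly one
rectangle, and rectangles lie inside the square). -/
structure Mondrian (n : ℕ) where
  rects : Finset Rect
  pos : ∀ r ∈ rects, 0 < r.w ∧ 0 < r.h
  inside : ∀ r ∈ rects, r.x + r.w ≤ n ∧ r.y + r.h ≤ n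
  cover : ∀ i j : ℕ, i < n → j < n → ∃! r : Rect, r ∈ rects ∧ r.Covers i j
  noncong : ∀ r ∈ rects, ∀ s ∈ rects, r ≠ s → ¬ r.Congruent s

/-- The defect of a Mondrian partition: the difference between the largest
and the smallest rectangle areas. -/
def Mondrian.defect {n : ℕ} (P : Mondrian n) : ℕ :=
  P.rects.sup fun r => P.rects.sup fun s => r.area - s.area

/-- A Mondrian partition is perfect if all its rectangles have the same area. -/
def Mondrian.IsPerfect {n : ℕ} (P : Mondrian n) : Prop :=
  ∀ r ∈ P.rects, ∀ s ∈ P.rects, r.area = s.area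

/-- `mondrianDk n k` is the minimum defect over all Mondrian partitions of the
`n × n` square using exactly `k` rectangles. -/
noncomputable def mondrianDk (n k : ℕ) : ℕ :=
  sInf {d | ∃ P : Mondrian n, P.rects.card = k ∧ P.defect = d}

/-- `mondrianD n` is the minimum defect over all Mondrian partitions of the
`n × n` square (into at least two rectangles). -/
noncomputable def mondrianD (n : ℕ) : ℕ :=
  sInf {d | ∃ P : Mondrian n, 2 ≤ P.rects.card ∧ P.defect = d}


section MondrianHelpers

instance (r s : Rect) : Decidable (r.Congruent s) := by
  unfold Rect.Congruent; infer_instance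

instance (r : Rect) (i j : ℕ) : Decidable (r.Covers i j) := by
  unfold Rect.Covers; infer_instance

def mP3 : Mondrian 3 where
  rects := {⟨0,0,1,3⟩, ⟨1,0,2,2⟩, ⟨1,2,2,1⟩}
  pos := by decide
  inside := by decide
  cover := by
    intro i j hi hj
    interval_cases i <;> interval_cases j
    · exact ⟨⟨0,0,1,3⟩, ⟨by decide, by decide⟩, by rintro s ⟨hs, hc⟩; fin_cases hs <;> revert hc <;> decide⟩
    · exact ⟨⟨0,0,1,3⟩, ⟨by decide, by decide⟩, by rintro s ⟨hs, hc⟩; fin_cases hs <;> revert hc <;> decide⟩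
    · exact ⟨⟨0,0,1,3⟩, ⟨by decide, by decide⟩, by rintro s ⟨hs, hc⟩; fin_cases hs <;> revert hc <;> decide⟩
    · exact ⟨⟨1,0,2,2⟩, ⟨by decide, by decide⟩, by rintro s ⟨hs, hc⟩; fin_cases hs <;> revert hc <;> decide⟩
    · exact ⟨⟨1,0,2,2⟩, ⟨by decide, by decide⟩, by rintro s ⟨hs, hc⟩; fin_cases hs <;> revert hc <;> decide⟩
    · exact ⟨⟨1,2,2,1⟩, ⟨by decide, by decide⟩, by rintro s ⟨hs, hc⟩; fin_cases hs <;> revert hc <;> decide⟩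
    · exact ⟨⟨1,0,2,2⟩, ⟨by decide, by decide⟩, by rintro s ⟨hs, hc⟩; fin_cases hs <;> revert hc <;> decide⟩
    · exact ⟨⟨1,0,2,2⟩, ⟨by decide, by decide⟩, by rintro s ⟨hs, hc⟩; fin_cases hs <;> revert hc <;> decide⟩
    · exact ⟨⟨1,2,2,1⟩, ⟨by decide, by decide⟩, by rintro s ⟨hs, hc⟩; fin_cases hs <;> revert hc <;> decide⟩
  noncong := by decide


def mcells (r : Rect) : Finset (ℕ × ℕ) :=
  Finset.Ico r.x (r.x + r.w) ×ˢ Finset.Ico r.y (r.y + r.h)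

lemma mem_mcells (r : Rect) (i j : ℕ) : (i, j) ∈ mcells r ↔ r.Covers i j := by
  simp [mcells, Finset.mem_product, Finset.mem_Ico, Rect.Covers]
  tauto

lemma msum_area (P : Mondrian 3) : ∑ r ∈ P.rects, r.area = 9 := by
  have hdisj : ∀ r ∈ P.rects, ∀ s ∈ P.rects, r ≠ s → Disjoint (mcells r) (mcells s) := by
    intro r hr s hs hne
    rw [Finset.disjoint_left]
    rintro ⟨i, j⟩ hir his
    rw [mem_mcells] at hir his
    have hi : i < 3 := lt_of_lt_of_le hir.2.1 (P.inside r hr).1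
    have hj : j < 3 := lt_of_lt_of_le hir.2.2.2 (P.inside r hr).2
    obtain ⟨u, _, hu⟩ := P.cover i j hi hj
    exact hne ((hu r ⟨hr, hir⟩).trans (hu s ⟨hs, his⟩).symm)
  have hset : P.rects.biUnion mcells = Finset.range 3 ×ˢ Finset.range 3 := by
    ext ⟨i, j⟩
    simp only [Finset.mem_biUnion, Finset.mem_product, Finset.mem_range]
    constructor
    · rintro ⟨r, hr, hij⟩
      rw [mem_mcells] at hij
      exact ⟨lt_of_lt_of_le hij.2.1 (P.inside r hr).1,
             lt_of_lt_of_le hij.2.2.2 (P.inside r hr).2⟩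
    · rintro ⟨hi, hj⟩
      obtain ⟨r, ⟨hr, hc⟩, _⟩ := P.cover i j hi hj
      exact ⟨r, hr, (mem_mcells r i j).2 hc⟩
  have hc := Finset.card_biUnion hdisj
  rw [hset] at hc
  simp only [Finset.card_product, Finset.card_range] at hc
  have hca : ∀ r ∈ P.rects, (mcells r).card = r.area := by
    intro r _
    simp [mcells, Finset.card_product, Nat.card_Ico, Rect.area]
  rw [Finset.sum_congr rfl hca] at hc
  exact hc.symm

lemma mdims (P : Mondrian 3) (r : Rect) (hr : r ∈ P.rects) :
    1 ≤ r.w ∧ r.w ≤ 3 ∧ 1 ≤ r.h ∧ r.h ≤ 3 := by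
  have h1 := P.pos r hr
  have h2 := P.inside r hr
  omega

lemma area_eq_congr {w1 h1 w2 h2 : ℕ} (hw1 : 1 ≤ w1) (hw1' : w1 ≤ 3)
    (hh1 : 1 ≤ h1) (hh1' : h1 ≤ 3) (hw2 : 1 ≤ w2) (hw2' : w2 ≤ 3)
    (hh2 : 1 ≤ h2) (hh2' : h2 ≤ 3) (h : w1 * h1 = w2 * h2) :
    (w1 = w2 ∧ h1 = h2) ∨ (w1 = h2 ∧ h1 = w2) := by
  interval_cases w1 <;> interval_cases h1 <;> interval_cases w2 <;> interval_cases h2 <;> omega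

lemma no_area5 {w h : ℕ} (hw : 1 ≤ w) (hw' : w ≤ 3) (hh : 1 ≤ h) (hh' : h ≤ 3) :
    w * h ≠ 5 := by
  interval_cases w <;> interval_cases h <;> omega

lemma mlb (P : Mondrian 3) (hcard : 2 ≤ P.rects.card) : 2 ≤ P.defect := by
  by_contra hlt
  push_neg at hlt
  have hdiff : ∀ r ∈ P.rects, ∀ s ∈ P.rects, r.area ≤ s.area + 1 := by
    intro r hr s hs
    have h1 : r.area - s.area ≤ P.rects.sup fun s => r.area - s.area :=
      Finset.le_sup (f := fun s => r.area - s.area) hs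
    have h2 : (P.rects.sup fun s => r.area - s.area) ≤ P.defect :=
      Finset.le_sup (f := fun r => P.rects.sup fun s => r.area - s.area) hr
    omega
  have hane : ∀ r ∈ P.rects, ∀ s ∈ P.rects, r ≠ s → r.area ≠ s.area := by
    intro r hr s hs hne heq
    obtain ⟨hw1, hw1', hh1, hh1'⟩ := mdims P r hr
    obtain ⟨hw2, hw2', hh2, hh2'⟩ := mdims P s hs
    exact P.noncong r hr s hs hne
      (area_eq_congr hw1 hw1' hh1 hh1' hw2 hw2' hh2 hh2' heq)
  -- card ≤ 2
  have hcard2 : P.rects.card = 2 := by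
    by_contra hc
    have h3 : 2 < P.rects.card := by omega
    obtain ⟨a, b, c, ha, hb, hc', hab, hac, hbc⟩ := Finset.two_lt_card_iff.mp h3
    have := hdiff a ha b hb
    have := hdiff b hb a ha
    have := hdiff a ha c hc'
    have := hdiff c hc' a ha
    have := hdiff b hb c hc'
    have := hdiff c hc' b hb
    have := hane a ha b hb hab
    have := hane a ha c hc' hac
    have := hane b hb c hc' hbc
    omega
  obtain ⟨a, b, hab, hset⟩ := Finset.card_eq_two.mp hcard2
  have ha : a ∈ P.rects := by rw [hset]; simp
  have hb : b ∈ P.rects := by rw [hset]; simp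
  have hsum := msum_area P
  rw [hset, Finset.sum_pair hab] at hsum
  have h1 := hdiff a ha b hb
  have h2 := hdiff b hb a ha
  have h3 := hane a ha b hb hab
  -- areas are 4 and 5
  obtain ⟨hw1, hw1', hh1, hh1'⟩ := mdims P a ha
  obtain ⟨hw2, hw2', hh2, hh2'⟩ := mdims P b hb
  have h5a := no_area5 hw1 hw1' hh1 hh1'
  have h5b := no_area5 hw2 hw2' hh2 hh2'
  simp only [Rect.area] at *
  omega

theorem mondrian_three' : mondrianD 3 = 2 ∧ mondrianDk 3 3 = 2 ∧
    ∃ P : Mondrian 3, P.rects.card = 3 ∧ P.defect = 2 := by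
  have hcard : mP3.rects.card = 3 := by decide
  have hdef : mP3.defect = 2 := by decide
  unfold mondrianD mondrianDk
  refine ⟨?_, ?_, ⟨mP3, hcard, hdef⟩⟩
  · apply le_antisymm
    · refine Nat.sInf_le ?_
      rw [Set.mem_setOf_eq]
      exact ⟨mP3, by omega, hdef⟩
    · refine le_csInf ⟨2, ?_⟩ ?_
      · rw [Set.mem_setOf_eq]; exact ⟨mP3, by omega, hdef⟩
      rintro d ⟨P, hP, rfl⟩
      exact mlb P hP
  · apply le_antisymm
    · refine Nat.sInf_le ?_
      rw [Set.mem_setOf_eq]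
      exact ⟨mP3, hcard, hdef⟩
    · refine le_csInf ⟨2, ?_⟩ ?_
      · rw [Set.mem_setOf_eq]; exact ⟨mP3, hcard, hdef⟩
      rintro d ⟨P, hP, rfl⟩
      exact mlb P (by omega)

end MondrianHelpers

/-- The minimum defect over all Mondrian partitions of the `3 × 3` square is `2`:
`d(3) = d_3(3) = 2`, and the optimum is attained using exactly three rectangles. -/


theorem mondrian_three : mondrianD 3 = 2 ∧ mondrianDk 3 3 = 2 ∧
    ∃ P : Mondrian 3, P.rects.card = 3 ∧ P.defect = 2 := by
  exact mondrian_three'
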